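/- arXiv:2506.19216 — 8 statements merged into one kernel-verified Lean document; each statement's English description precedes it below -/
import Mathlib

section
/- Let n ≥ 3, let S = {f, r^a f, r^b f} be a symmetric generating set of the dihedral group D_n consisting of three distinct reflections, and let F : D_n → ℤ_n be the map defined by F(r^i) = i and F(r^i f) = i. For every l ≥ 0, F is injective on the set W_l of elements expressible as a product of exactly l elements of S; consequently |F(W_l)| = |W_l|. -/
open Pointwise DihedralGroup

/-- The map `F : D_n → ℤ_n` sending `r^i f^k` to `i`.  (In Mathlib's convention
`sr j = r^{-j} * f`, so `F (sr j) = -j` and `F (r i) = i`, which gives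
`F (r^i) = i` and `F (r^i * f) = i`.) -/
def dihedralF (n : ℕ) : DihedralGroup n → ZMod n
  | .r i => i
  | .sr i => -i

/-- For a symmetric generating set `S = {f, r^a f, r^b f}` of `D_n` (n ≥ 3)
consisting of three distinct reflections, the map `F` is injective on each word set
`W_l = S ^ l`, and consequently `|F(W_l)| = |W_l|`. -/
theorem F_injOn_word_sets (n : ℕ) (hn : 3 ≤ n) (a b : ZMod n)
    (S : Set (DihedralGroup n))
    (hS : S = {sr 0, r a * sr 0, r b * sr 0})
    (h₁ : (sr 0 : DihedralGroup n) ≠ r a * sr 0)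
    (h₂ : (sr 0 : DihedralGroup n) ≠ r b * sr 0)
    (h₃ : (r a * sr 0 : DihedralGroup n) ≠ r b * sr 0)
    (hgen : Subgroup.closure S = ⊤) (l : ℕ) :
    Set.InjOn (dihedralF n) (S ^ l) ∧
      (dihedralF n '' (S ^ l)).ncard = (S ^ l).ncard := by
  have hSrefl : ∀ s ∈ S, ∃ c : ZMod n, s = sr c := by
    intro s hs
    rw [hS] at hs
    rcases hs with h | h | h
    · exact ⟨0, h⟩
    · exact ⟨0 - a, by rw [h, r_mul_sr]⟩
    · exact ⟨0 - b, by rw [h, r_mul_sr]⟩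
  have key : ∀ m : ℕ, ∀ x ∈ S ^ m,
      ∃ i : ZMod n, x = if Even m then DihedralGroup.r i else sr i := by
    intro m
    induction m with
    | zero =>
      intro x hx
      simp only [pow_zero, Set.mem_one] at hx
      exact ⟨0, by simp [hx]⟩
    | succ k ih =>
      intro x hx
      rw [pow_succ] at hx
      rcases hx with ⟨y, hy, s, hs, rfl⟩
      obtain ⟨i, hi⟩ := ih y hy
      obtain ⟨c, rfl⟩ := hSrefl s hs
      by_cases hk : Even k
      · simp only [hk, if_true] at hi
        refine ⟨c - i, ?_⟩
        simp only [Nat.even_add_one, hk, not_true, if_false, hi]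
        exact (r_mul_sr i c).symm ▸ rfl
      · simp only [hk, if_false] at hi
        refine ⟨c - i, ?_⟩
        simp only [Nat.even_add_one, hk, not_false_iff, if_true, hi]
        exact (sr_mul_sr i c).symm ▸ rfl
  have hinj : Set.InjOn (dihedralF n) (S ^ l) := by
    intro x hx y hy hxy
    obtain ⟨i, rfl⟩ := key l x hx
    obtain ⟨j, rfl⟩ := key l y hy
    by_cases hl : Even l <;> simp [hl, dihedralF] at hxy ⊢ <;> exact hxy
  exact ⟨hinj, Set.ncard_image_of_injOn hinj⟩
end

section
/- Let n ≥ 3, let S = {f, r^a f, r^b f} be a symmetric generating set of the dihedral group D_n consisting of three distinct reflections, let F : D_n → ℤ_n send r^i f^k to i, and write W'_l = F(W_l) and S' = F(S) = {0, a, b} ⊆ ℤ_n. If l ≥ 0 is even, then W'_{l+1} = W'_l + S', where W'_l + S' = { x + k | x ∈ W'_l, k ∈ S' } is the sumset in ℤ_n. -/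
open Pointwise DihedralGroup

/-- For a symmetric generating set `S = {f, r^a f, r^b f}` of `D_n` (n ≥ 3)
consisting of three distinct reflections, writing `W'_l = F(S ^ l)` and `S' = F(S)`,
if `l` is even then `W'_{l+1} = W'_l + S'` (sumset in `ℤ_n`). -/
theorem F_word_sets_even_step (n : ℕ) (hn : 3 ≤ n) (a b : ZMod n)
    (S : Set (DihedralGroup n))
    (hS : S = {sr 0, r a * sr 0, r b * sr 0})
    (h₁ : (sr 0 : DihedralGroup n) ≠ r a * sr 0)
    (h₂ : (sr 0 : DihedralGroup n) ≠ r b * sr 0)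
    (h₃ : (r a * sr 0 : DihedralGroup n) ≠ r b * sr 0)
    (hgen : Subgroup.closure S = ⊤) (l : ℕ) (hl : Even l) :
    dihedralF n '' (S ^ (l + 1)) = dihedralF n '' (S ^ l) + dihedralF n '' S := by
  -- every element of S is a reflection
  have hrefl : ∀ s ∈ S, ∃ u : ZMod n, s = sr u := by
    intro s hs
    rw [hS] at hs
    rcases hs with h | h | h
    · exact ⟨0, h⟩
    · exact ⟨0 - a, by rw [h, r_mul_sr]⟩
    · exact ⟨0 - b, by rw [h, r_mul_sr]⟩
  -- every element of S^l for even l is a rotation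
  have hrot : ∀ m : ℕ, Even m → ∀ w ∈ S ^ m, ∃ x : ZMod n, w = r x := by
    intro m hm
    obtain ⟨k, rfl⟩ := hm
    induction k with
    | zero =>
      intro w hw
      rw [Nat.add_zero, pow_zero, Set.mem_one] at hw
      exact ⟨0, by rw [hw, one_def]⟩
    | succ k ih =>
      intro w hw
      have : k + 1 + (k + 1) = (k + k) + 1 + 1 := by ring
      rw [this, pow_succ, pow_succ] at hw
      obtain ⟨v, hv, s2, hs2, rfl⟩ := hw
      obtain ⟨w0, hw0, s1, hs1, rfl⟩ := hv
      obtain ⟨x, rfl⟩ := ih w0 hw0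
      obtain ⟨u, rfl⟩ := hrefl s1 hs1
      obtain ⟨u', rfl⟩ := hrefl s2 hs2
      exact ⟨u' - (u - x), by show r x * sr u * sr u' = _; rw [r_mul_sr, sr_mul_sr]⟩
  have hF : ∀ (x : ZMod n) (s : DihedralGroup n),
      dihedralF n (r x * s) = x + dihedralF n s := by
    intro x s
    cases s with
    | r j => rw [r_mul_r]; rfl
    | sr j => rw [r_mul_sr]; show -(j - x) = x + -j; ring
  ext y
  constructor
  · rintro ⟨w, hw, rfl⟩
    rw [pow_succ] at hw
    obtain ⟨w0, hw0, s, hs, rfl⟩ := hw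
    obtain ⟨x, rfl⟩ := hrot l hl w0 hw0
    rw [hF]
    exact Set.add_mem_add ⟨r x, hw0, rfl⟩ ⟨s, hs, rfl⟩
  · rintro ⟨-, ⟨w0, hw0, rfl⟩, -, ⟨s, hs, rfl⟩, rfl⟩
    obtain ⟨x, rfl⟩ := hrot l hl w0 hw0
    refine ⟨r x * s, by rw [pow_succ]; exact Set.mul_mem_mul hw0 hs, ?_⟩
    show dihedralF n (r x * s) = x + dihedralF n s
    exact hF x s
end

section
/- Let n ≥ 3, let S = {f, r^a f, r^b f} be a symmetric generating set of the dihedral group D_n consisting of three distinct reflections, let F : D_n → ℤ_n send r^i f^k to i, and write W'_l = F(W_l) and S' = F(S) = {0, a, b} ⊆ ℤ_n. If l ≥ 1 is odd, then W'_{l+1} = W'_l − S', where W'_l − S' = { x − k | x ∈ W'_l, k ∈ S' } is the difference set in ℤ_n. -/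
open Pointwise DihedralGroup

lemma odd_pow_sr {n : ℕ} {S : Set (DihedralGroup n)}
    (hS : ∀ x ∈ S, ∃ i, x = sr i) :
    ∀ l : ℕ, Odd l → ∀ x ∈ S ^ l, ∃ i, x = sr i := by
  intro l hl
  obtain ⟨m, rfl⟩ := hl
  induction m with
  | zero => simpa using hS
  | succ k ih =>
    intro x hx
    have : 2 * (k + 1) + 1 = (2 * k + 1) + 1 + 1 := by ring
    rw [this, pow_succ, pow_succ] at hx
    obtain ⟨y, hy, s2, hs2, rfl⟩ := hx
    obtain ⟨z, hz, s1, hs1, rfl⟩ := hy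
    obtain ⟨i, rfl⟩ := ih z hz
    obtain ⟨j, rfl⟩ := hS s1 hs1
    obtain ⟨k', rfl⟩ := hS s2 hs2
    exact ⟨_, rfl⟩

/-- For a symmetric generating set `S = {f, r^a f, r^b f}` of `D_n` (n ≥ 3)
consisting of three distinct reflections, writing `W'_l = F(S ^ l)` and `S' = F(S)`,
if `l ≥ 1` is odd then `W'_{l+1} = W'_l − S'` (difference set in `ℤ_n`). -/
theorem F_word_sets_odd_step (n : ℕ) (hn : 3 ≤ n) (a b : ZMod n)
    (S : Set (DihedralGroup n))
    (hS : S = {sr 0, r a * sr 0, r b * sr 0})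
    (h₁ : (sr 0 : DihedralGroup n) ≠ r a * sr 0)
    (h₂ : (sr 0 : DihedralGroup n) ≠ r b * sr 0)
    (h₃ : (r a * sr 0 : DihedralGroup n) ≠ r b * sr 0)
    (hgen : Subgroup.closure S = ⊤) (l : ℕ) (hl : Odd l) (hl1 : 1 ≤ l) :
    dihedralF n '' (S ^ (l + 1)) = dihedralF n '' (S ^ l) - dihedralF n '' S := by
  have hSsr : ∀ x ∈ S, ∃ i, x = sr i := by
    intro x hx
    rw [hS] at hx
    rcases hx with rfl | rfl | rfl
    · exact ⟨0, rfl⟩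
    · exact ⟨0 - a, rfl⟩
    · exact ⟨0 - b, rfl⟩
  have hW := odd_pow_sr hSsr l hl
  ext z
  constructor
  · rintro ⟨y, hy, rfl⟩
    rw [pow_succ] at hy
    obtain ⟨x, hx, s, hs, rfl⟩ := hy
    obtain ⟨i, rfl⟩ := hW x hx
    obtain ⟨j, rfl⟩ := hSsr s hs
    refine ⟨dihedralF n (sr i), ⟨sr i, hx, rfl⟩, dihedralF n (sr j), ⟨sr j, hs, rfl⟩, ?_⟩
    show -i - -j = dihedralF n (r (j - i))
    show -i - -j = j - i
    ring
  · rintro ⟨u, ⟨x, hx, rfl⟩, v, ⟨s, hs, rfl⟩, rfl⟩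
    obtain ⟨i, rfl⟩ := hW x hx
    obtain ⟨j, rfl⟩ := hSsr s hs
    refine ⟨sr i * sr j, ?_, ?_⟩
    · rw [pow_succ]; exact ⟨sr i, hx, sr j, hs, rfl⟩
    · show dihedralF n (r (j - i)) = -i - -j
      show j - i = -i - -j
      ring
end

section
/- Let p be a prime, let S = {f, r^a f, r^b f} ⊆ D_p, and suppose the seven residues 0, a, b, −a, −b, a−b, b−a are pairwise distinct modulo p. Then for every l > 0, the set W_l of elements of D_p expressible as a product of exactly l elements of S satisfies |W_l| ≥ min(3l, p). -/
open Pointwise DihedralGroup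

private lemma sr_inj {p : ℕ} : Function.Injective (sr : ZMod p → DihedralGroup p) :=
  fun i j h => by injection h

private lemma r_inj {p : ℕ} : Function.Injective (r : ZMod p → DihedralGroup p) :=
  fun i j h => by injection h

private lemma srsr {p : ℕ} (A B : Finset (ZMod p)) :
    A.image sr * B.image sr = (Finset.image₂ (fun i j => j - i) A B).image r := by
  ext x
  simp only [Finset.mem_mul, Finset.mem_image, Finset.mem_image₂]
  constructor
  · rintro ⟨_, ⟨i, hi, rfl⟩, _, ⟨j, hj, rfl⟩, rfl⟩
    exact ⟨j - i, ⟨i, hi, j, hj, rfl⟩, (sr_mul_sr i j).symm⟩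
  · rintro ⟨_, ⟨i, hi, j, hj, rfl⟩, rfl⟩
    exact ⟨sr i, ⟨i, hi, rfl⟩, sr j, ⟨j, hj, rfl⟩, sr_mul_sr i j⟩

private lemma srr {p : ℕ} (A B : Finset (ZMod p)) :
    A.image sr * B.image r = (A + B).image sr := by
  ext x
  simp only [Finset.mem_mul, Finset.mem_image, Finset.mem_add]
  constructor
  · rintro ⟨_, ⟨i, hi, rfl⟩, _, ⟨j, hj, rfl⟩, rfl⟩
    exact ⟨i + j, ⟨i, hi, j, hj, rfl⟩, (sr_mul_r i j).symm⟩
  · rintro ⟨_, ⟨i, hi, j, hj, rfl⟩, rfl⟩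
    exact ⟨sr i, ⟨i, hi, rfl⟩, r j, ⟨j, hj, rfl⟩, sr_mul_r i j⟩

private lemma rr {p : ℕ} (A B : Finset (ZMod p)) :
    A.image r * B.image r = (A + B).image r := by
  ext x
  simp only [Finset.mem_mul, Finset.mem_image, Finset.mem_add]
  constructor
  · rintro ⟨_, ⟨i, hi, rfl⟩, _, ⟨j, hj, rfl⟩, rfl⟩
    exact ⟨i + j, ⟨i, hi, j, hj, rfl⟩, (r_mul_r i j).symm⟩
  · rintro ⟨_, ⟨i, hi, j, hj, rfl⟩, rfl⟩
    exact ⟨r i, ⟨i, hi, rfl⟩, r j, ⟨j, hj, rfl⟩, r_mul_r i j⟩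

/-- Let `p` be prime and `S = {f, r^a f, r^b f} ⊆ D_p`, where the seven residues
`0, a, b, −a, −b, a−b, b−a` are pairwise distinct modulo `p`.  Then for every `l > 0` the word
set `W_l = S ^ l` satisfies `|W_l| ≥ min (3l) p`. -/
theorem word_set_card_prime (p : ℕ) (hp : p.Prime) (a b : ZMod p)
    (S : Set (DihedralGroup p))
    (hS : S = {sr 0, r a * sr 0, r b * sr 0})
    (hdist : ([0, a, b, -a, -b, a - b, b - a] : List (ZMod p)).Pairwise (· ≠ ·))
    (l : ℕ) (hl : 0 < l) :
    min (3 * l) p ≤ (S ^ l).ncard := by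
  haveI : Fact p.Prime := ⟨hp⟩
  haveI : NeZero p := ⟨hp.ne_zero⟩
  have hnod : ([0, a, b, -a, -b, a - b, b - a] : List (ZMod p)).Nodup := hdist
  have h7 : ([0, a, b, -a, -b, a - b, b - a] : List (ZMod p)).toFinset.card = 7 := by
    rw [List.toFinset_card_of_nodup hnod]; rfl
  have hp7 : 7 ≤ p := by
    have := Finset.card_le_univ ([0, a, b, -a, -b, a - b, b - a] : List (ZMod p)).toFinset
    rwa [h7, ZMod.card] at this
  simp only [List.pairwise_cons, List.mem_cons, List.not_mem_nil] at hdist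
  obtain ⟨hd1, hd2, hd3, hd4, hd5, hd6, -⟩ := hdist
  set A : Finset (ZMod p) := {0, -a, -b} with hA
  have hAcard : A.card = 3 := by
    refine Finset.card_eq_three.mpr ⟨0, -a, -b, ?_, ?_, ?_, rfl⟩
    · intro h; exact hd1 a (by simp) (neg_eq_zero.mp h.symm).symm
    · intro h; exact hd1 b (by simp) (neg_eq_zero.mp h.symm).symm
    · intro h; exact hd2 b (by simp) (neg_injective h)
  set D : Finset (ZMod p) := Finset.image₂ (fun i j => j - i) A A with hDdef
  have hD7 : 7 ≤ D.card := by
    rw [← h7]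
    apply Finset.card_le_card
    have mem : ∀ i ∈ A, ∀ j ∈ A, j - i ∈ D := fun i hi j hj =>
      Finset.mem_image₂_of_mem hi hj
    have m0 : (0 : ZMod p) ∈ A := by simp [hA]
    have ma : -a ∈ A := by simp [hA]
    have mb : -b ∈ A := by simp [hA]
    intro x hx
    simp only [List.mem_toFinset, List.mem_cons, List.not_mem_nil, or_false] at hx
    rcases hx with h | h | h | h | h | h | h
    · rw [h, show (0 : ZMod p) = 0 - 0 from by ring]; exact mem _ m0 _ m0
    · rw [h, show a = 0 - -a from by ring]; exact mem _ ma _ m0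
    · rw [h, show b = 0 - -b from by ring]; exact mem _ mb _ m0
    · rw [h, show -a = -a - 0 from by ring]; exact mem _ m0 _ ma
    · rw [h, show -b = -b - 0 from by ring]; exact mem _ m0 _ mb
    · rw [h, show a - b = -b - -a from by ring]; exact mem _ ma _ mb
    · rw [h, show b - a = -a - -b from by ring]; exact mem _ mb _ ma
  set s : Finset (DihedralGroup p) := A.image sr with hs
  have hSs : S = ↑s := by
    rw [hS, hs]
    ext x
    simp [hA, r_mul_sr, eq_comm, zero_sub]
  have hs2 : s ^ 2 = D.image r := by rw [sq, hs, srsr]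
  have key : ∀ k : ℕ,
      (∃ X : Finset (ZMod p), s ^ (2*k+1) = X.image sr ∧ min (3*(2*k+1)) p ≤ X.card) ∧
      (∃ X : Finset (ZMod p), s ^ (2*k+2) = X.image r ∧ min (3*(2*k+2)) p ≤ X.card) := by
    intro k
    induction k with
    | zero =>
      constructor
      · exact ⟨A, by rw [pow_one], by omega⟩
      · exact ⟨D, hs2, by omega⟩
    | succ k ih =>
      obtain ⟨⟨X, hX, hXc⟩, ⟨Y, hY, hYc⟩⟩ := ih
      have hXne : X.Nonempty := by
        rw [← Finset.card_pos]; omega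
      have hYne : Y.Nonempty := by
        rw [← Finset.card_pos]; omega
      have hDne : D.Nonempty := by
        rw [← Finset.card_pos]; omega
      constructor
      · refine ⟨X + D, ?_, ?_⟩
        · rw [show 2*(k+1)+1 = (2*k+1)+2 by ring, pow_add, hX, hs2, srr]
        · have := ZMod.cauchy_davenport hp hXne hDne
          omega
      · refine ⟨Y + D, ?_, ?_⟩
        · rw [show 2*(k+1)+2 = (2*k+2)+2 by ring, pow_add, hY, hs2, rr]
        · have := ZMod.cauchy_davenport hp hYne hDne
          omega
  rw [hSs, ← Finset.coe_pow, Set.ncard_coe_finset]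
  rcases Nat.even_or_odd l with ⟨k, hk⟩ | ⟨k, hk⟩
  · obtain ⟨-, X, hX, hXc⟩ := key (k - 1)
    have hk' : 2*(k-1)+2 = l := by omega
    rw [← hk', hX, Finset.card_image_of_injective _ r_inj]
    omega
  · obtain ⟨⟨X, hX, hXc⟩, -⟩ := key k
    have hk' : 2*k+1 = l := by omega
    rw [← hk', hX, Finset.card_image_of_injective _ sr_inj]
    omega
end

section
/- Let n ≥ 3 and let S = {f, r^a f, r^b f} be a symmetric generating set of the dihedral group D_n consisting of three distinct reflections. Then for every l > 0, the set W_l of elements of D_n expressible as a product of exactly l elements of S satisfies |W_l| ≥ min(2l + 1, n). -/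
open Pointwise DihedralGroup

section Aux

variable {n : ℕ}

private lemma cast_exists_nat [NeZero n] (z : ℤ) :
    ∃ k : ℕ, ((k : ZMod n)) = (z : ZMod n) := by
  refine ⟨(z % (n : ℤ)).toNat, ?_⟩
  have hn : (0 : ℤ) < (n : ℤ) := by exact_mod_cast Nat.pos_of_ne_zero (NeZero.ne n)
  have h1 : (((z % (n : ℤ)).toNat : ℤ) : ZMod n) = ((z % (n : ℤ) : ℤ) : ZMod n) := by
    rw [Int.toNat_of_nonneg (Int.emod_nonneg z hn.ne')]
  have h2 : ((z % (n : ℤ) : ℤ) : ZMod n) = (z : ZMod n) := ZMod.intCast_mod z n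
  rw [← h2, ← h1, Int.cast_natCast]

private lemma reach_all [NeZero n] {u v : ZMod n}
    (hcl : AddSubgroup.closure ({u, v} : Set (ZMod n)) = ⊤)
    (P : Set (ZMod n)) (g₀ : ZMod n) (hg₀ : g₀ ∈ P)
    (hu : ∀ x ∈ P, x + u ∈ P) (hv : ∀ x ∈ P, x + v ∈ P) (g : ZMod n) :
    g ∈ P := by
  have key : ∀ (j k : ℕ), g₀ + (k : ZMod n) * u + (j : ZMod n) * v ∈ P := by
    intro j
    induction j with
    | zero =>
      intro k
      induction k with
      | zero => simpa using hg₀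
      | succ k ihk =>
        have := hu _ ihk
        convert this using 1
        push_cast
        ring
    | succ j ihj =>
      intro k
      have := hv _ (ihj k)
      convert this using 1
      push_cast
      ring
  have hg : g - g₀ ∈ AddSubgroup.closure ({u, v} : Set (ZMod n)) := by
    rw [hcl]; trivial
  obtain ⟨zk, zj, hzz⟩ := AddSubgroup.mem_closure_pair.mp hg
  obtain ⟨k, hk⟩ := cast_exists_nat (n := n) zk
  obtain ⟨j, hj⟩ := cast_exists_nat (n := n) zj
  have hzz' : (zk : ZMod n) * u + (zj : ZMod n) * v = g - g₀ := by
    rw [← zsmul_eq_mul, ← zsmul_eq_mul]; exact hzz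
  have heq : g₀ + (k : ZMod n) * u + (j : ZMod n) * v = g := by
    rw [hk, hj, add_assoc, hzz']; ring
  exact heq ▸ key j k

private lemma core_lemma [NeZero n] {u v : ZMod n} (hu0 : u ≠ 0) (hv0 : v ≠ 0) (huv : u ≠ v)
    (hcl : AddSubgroup.closure ({u, v} : Set (ZMod n)) = ⊤)
    {A Y : Set (ZMod n)}
    (hAY : A ⊆ Y) (hYu : ∀ x ∈ A, x + u ∈ Y) (hYv : ∀ x ∈ A, x + v ∈ Y)
    (hcard : Y.ncard ≤ A.ncard + 1) (hcardn : Y.ncard < n)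
    (hnsub : ∃ x ∈ A, x + u ∉ A) : False := by
  obtain ⟨x₀, hx₀, hx₀u⟩ := hnsub
  set m := x₀ + u with hm
  have hmY : m ∈ Y := hYu _ hx₀
  have hmA : m ∉ A := hx₀u
  have hins : insert m A ⊆ Y := Set.insert_subset hmY hAY
  have hcard2 : Y.ncard ≤ (insert m A).ncard := by
    rw [Set.ncard_insert_of_notMem hmA (Set.toFinite A)]
    exact hcard
  have hY : insert m A = Y := Set.eq_of_subset_of_ncard_le hins hcard2 (Set.toFinite Y)
  have w1 : ∀ x ∈ A, x + u ∈ insert m A := fun x hx => hY ▸ hYu x hx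
  have w2 : ∀ x ∈ A, x + v ∈ insert m A := fun x hx => hY ▸ hYv x hx
  by_cases hv' : ∀ x ∈ A, x + v ∈ A
  · -- A is invariant under +v; derive v = 0
    have himg : (fun x => x + v) '' A = A := by
      apply Set.eq_of_subset_of_ncard_le
      · rintro _ ⟨x, hx, rfl⟩; exact hv' x hx
      · rw [Set.ncard_image_of_injective A (add_left_injective v)]
      · exact Set.toFinite A
    have hmv : m + v ∉ A := by
      intro hmem
      rw [← himg] at hmem
      obtain ⟨x, hx, hxe⟩ := hmem
      have : x = m := by
        have := add_right_cancel hxe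
        exact this
      exact hmA (this ▸ hx)
    have h1 : x₀ + v ∈ A := hv' _ hx₀
    have h2 := w1 _ h1
    have h3 : x₀ + v + u = m + v := by rw [hm]; ring
    rw [h3] at h2
    rcases h2 with h2 | h2
    · exact hv0 (by rwa [add_eq_left] at h2)
    · exact hmv h2
  · push_neg at hv'
    obtain ⟨y₀, hy₀, hy₀v⟩ := hv'
    have hy₀m : y₀ + v = m := by
      have := hY ▸ hYv y₀ hy₀
      rcases this with h | h
      · exact h
      · exact absurd h hy₀v
    -- m + v ∈ A
    have hb1 : x₀ + v ∈ A := by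
      rcases w2 x₀ hx₀ with h | h
      · exact absurd (add_left_cancel (h.trans hm)) huv.symm
      · exact h
    have hb : m + v ∈ A := by
      have h2 := w1 _ hb1
      have h3 : x₀ + v + u = m + v := by rw [hm]; ring
      rw [h3] at h2
      rcases h2 with h2 | h2
      · exact absurd (by rwa [add_eq_left] at h2) hv0
      · exact h2
    -- m + u ∈ A
    have hc1 : y₀ + u ∈ A := by
      rcases w1 y₀ hy₀ with h | h
      · exact absurd (add_left_cancel (h.trans hy₀m.symm)) huv
      · exact h
    have hc : m + u ∈ A := by
      have h2 := w2 _ hc1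
      have h3 : y₀ + u + v = m + u := by rw [← hy₀m]; ring
      rw [h3] at h2
      rcases h2 with h2 | h2
      · exact absurd (by rwa [add_eq_left] at h2) hu0
      · exact h2
    -- insert m A is closed under +u and +v, hence is everything
    have hall : ∀ g, g ∈ insert m A := by
      refine reach_all hcl (insert m A) m (Set.mem_insert m A) ?_ ?_
      · rintro x (rfl | hx)
        · exact Set.mem_insert_of_mem _ hc
        · exact w1 x hx
      · rintro x (rfl | hx)
        · exact Set.mem_insert_of_mem _ hb
        · exact w2 x hx
    have huniv : insert m A = Set.univ := Set.eq_univ_of_forall hall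
    have : Y.ncard = n := by
      rw [← hY, huniv, Set.ncard_univ, Nat.card_eq_fintype_card, ZMod.card]
    omega

private lemma key_growth [NeZero n] {u v : ZMod n} (hu0 : u ≠ 0) (hv0 : v ≠ 0) (huv : u ≠ v)
    (hcl : AddSubgroup.closure ({u, v} : Set (ZMod n)) = ⊤)
    (A : Set (ZMod n)) (hA : A.Nonempty) :
    min (A.ncard + 2) n ≤ (A + ({0, u, v} : Set (ZMod n))).ncard := by
  by_contra hcon
  push_neg at hcon
  rw [lt_min_iff] at hcon
  obtain ⟨hY1, hY2⟩ := hcon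
  set Y := A + ({0, u, v} : Set (ZMod n)) with hYdef
  have hAY : A ⊆ Y := by
    intro x hx
    have : x + 0 ∈ Y := Set.add_mem_add hx (by simp)
    simpa using this
  have hYu : ∀ x ∈ A, x + u ∈ Y := fun x hx => Set.add_mem_add hx (by simp)
  have hYv : ∀ x ∈ A, x + v ∈ Y := fun x hx => Set.add_mem_add hx (by simp)
  have hcard : Y.ncard ≤ A.ncard + 1 := by omega
  by_cases hu' : ∀ x ∈ A, x + u ∈ A
  · by_cases hv' : ∀ x ∈ A, x + v ∈ A
    · obtain ⟨a₀, ha₀⟩ := hA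
      have hall : ∀ g, g ∈ A := reach_all hcl A a₀ ha₀ hu' hv'
      have : A.ncard = n := by
        rw [Set.eq_univ_of_forall hall, Set.ncard_univ, Nat.card_eq_fintype_card, ZMod.card]
      have := Set.ncard_le_ncard hAY (Set.toFinite Y)
      omega
    · push_neg at hv'
      refine core_lemma hv0 hu0 (Ne.symm huv) ?_ hAY hYv hYu hcard hY2 hv'
      rwa [Set.pair_comm]
  · push_neg at hu'
    exact core_lemma hu0 hv0 huv hcl hAY hYu hYv hcard hY2 hu'

private lemma sr_injective : Function.Injective (DihedralGroup.sr (n := n)) :=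
  fun x y h => by injection h

private lemma r_injective : Function.Injective (DihedralGroup.r (n := n)) :=
  fun x y h => by injection h

private lemma mul_img_r (X C : Set (ZMod n)) :
    (DihedralGroup.r '' X) * (DihedralGroup.sr '' C) = DihedralGroup.sr '' (-X + C) := by
  ext g
  constructor
  · rintro ⟨_, ⟨x, hx, rfl⟩, _, ⟨c, hc, rfl⟩, rfl⟩
    refine ⟨-x + c, Set.add_mem_add (Set.neg_mem_neg.mpr hx) hc, ?_⟩
    show DihedralGroup.sr (-x + c) = DihedralGroup.r x * DihedralGroup.sr c
    rw [r_mul_sr]; exact congrArg DihedralGroup.sr (by ring)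
  · rintro ⟨z, ⟨p, hp, q, hq, rfl⟩, rfl⟩
    rw [Set.mem_neg] at hp
    refine ⟨DihedralGroup.r (-p), ⟨-p, hp, rfl⟩, DihedralGroup.sr q, ⟨q, hq, rfl⟩, ?_⟩
    show DihedralGroup.r (-p) * DihedralGroup.sr q = DihedralGroup.sr (p + q)
    rw [r_mul_sr]; exact congrArg DihedralGroup.sr (by ring)

private lemma mul_img_sr (X C : Set (ZMod n)) :
    (DihedralGroup.sr '' X) * (DihedralGroup.sr '' C) = DihedralGroup.r '' (-X + C) := by
  ext g
  constructor
  · rintro ⟨_, ⟨x, hx, rfl⟩, _, ⟨c, hc, rfl⟩, rfl⟩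
    refine ⟨-x + c, Set.add_mem_add (Set.neg_mem_neg.mpr hx) hc, ?_⟩
    show DihedralGroup.r (-x + c) = DihedralGroup.sr x * DihedralGroup.sr c
    rw [sr_mul_sr]; exact congrArg DihedralGroup.r (by ring)
  · rintro ⟨z, ⟨p, hp, q, hq, rfl⟩, rfl⟩
    rw [Set.mem_neg] at hp
    refine ⟨DihedralGroup.sr (-p), ⟨-p, hp, rfl⟩, DihedralGroup.sr q, ⟨q, hq, rfl⟩, ?_⟩
    show DihedralGroup.sr (-p) * DihedralGroup.sr q = DihedralGroup.r (p + q)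
    rw [sr_mul_sr]; exact congrArg DihedralGroup.r (by ring)

/-- The coordinate of a dihedral group element. -/
private def toZMod : DihedralGroup n → ZMod n
  | DihedralGroup.r i => i
  | DihedralGroup.sr i => i

end Aux

/-- For a symmetric generating set `S = {f, r^a f, r^b f}` of `D_n` (n ≥ 3)
consisting of three distinct reflections, for every `l > 0` the word set `W_l = S ^ l`
satisfies `|W_l| ≥ min (2l + 1) n`. -/
theorem word_set_card_general (n : ℕ) (hn : 3 ≤ n) (a b : ZMod n)
    (S : Set (DihedralGroup n))
    (hS : S = {sr 0, r a * sr 0, r b * sr 0})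
    (h₁ : (sr 0 : DihedralGroup n) ≠ r a * sr 0)
    (h₂ : (sr 0 : DihedralGroup n) ≠ r b * sr 0)
    (h₃ : (r a * sr 0 : DihedralGroup n) ≠ r b * sr 0)
    (hgen : Subgroup.closure S = ⊤) (l : ℕ) (hl : 0 < l) :
    min (2 * l + 1) n ≤ (S ^ l).ncard := by
  haveI : NeZero n := ⟨by omega⟩
  set u : ZMod n := -a with hu
  set v : ZMod n := -b with hv
  have hS' : S = DihedralGroup.sr '' ({0, u, v} : Set (ZMod n)) := by
    rw [hS, Set.image_insert_eq, Set.image_insert_eq, Set.image_singleton,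
      r_mul_sr, r_mul_sr, zero_sub, zero_sub]
  have hu0 : u ≠ 0 := by
    intro h
    apply h₁
    rw [r_mul_sr, zero_sub, ← hu, h]
  have hv0 : v ≠ 0 := by
    intro h
    apply h₂
    rw [r_mul_sr, zero_sub, ← hv, h]
  have huv : u ≠ v := by
    intro h
    apply h₃
    rw [r_mul_sr, r_mul_sr, zero_sub, zero_sub, ← hu, ← hv, h]
  -- the rotations coordinates generate `ZMod n`
  have hcl : AddSubgroup.closure ({u, v} : Set (ZMod n)) = ⊤ := by
    set K := AddSubgroup.closure ({u, v} : Set (ZMod n)) with hK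
    let H : Subgroup (DihedralGroup n) :=
      { carrier := toZMod ⁻¹' (K : Set (ZMod n))
        one_mem' := by
          show toZMod (1 : DihedralGroup n) ∈ K
          show toZMod (DihedralGroup.r 0) ∈ K
          exact K.zero_mem
        mul_mem' := by
          rintro (x | x) (y | y) hx hy <;>
            simp only [Set.mem_preimage, SetLike.mem_coe, r_mul_r, r_mul_sr, sr_mul_r,
              sr_mul_sr] at * <;>
            first
              | exact K.add_mem hx hy
              | exact K.sub_mem hy hx
        inv_mem' := by
          rintro (x | x) hx <;>
            simp only [Set.mem_preimage, SetLike.mem_coe] at *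
          · show toZMod (DihedralGroup.r (-x)) ∈ K
            exact K.neg_mem hx
          · exact hx }
    have hSH : S ⊆ (H : Set (DihedralGroup n)) := by
      rw [hS']
      rintro _ ⟨c, hc, rfl⟩
      show c ∈ K
      rcases hc with rfl | rfl | rfl
      · exact K.zero_mem
      · exact AddSubgroup.subset_closure (by simp)
      · exact AddSubgroup.subset_closure (by simp)
    have htop : (⊤ : Subgroup (DihedralGroup n)) ≤ H := by
      rw [← hgen]
      exact (Subgroup.closure_le H).mpr hSH
    rw [eq_top_iff]
    intro x _
    exact htop (Subgroup.mem_top (DihedralGroup.r x))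
  -- main induction
  have main : ∀ l : ℕ, 0 < l → ∃ X : Set (ZMod n),
      (S ^ l = DihedralGroup.r '' X ∨ S ^ l = DihedralGroup.sr '' X) ∧
      min (2 * l + 1) n ≤ X.ncard := by
    intro l hl
    induction l with
    | zero => omega
    | succ l ih =>
      rcases Nat.eq_zero_or_pos l with rfl | hl'
      · refine ⟨{0, u, v}, Or.inr (by rw [pow_one]; exact hS'), ?_⟩
        have hcard3 : ({0, u, v} : Set (ZMod n)).ncard = 3 := by
          rw [Set.ncard_insert_of_notMem (by simp [hu0.symm, hv0.symm]) (Set.toFinite _),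
            Set.ncard_insert_of_notMem (by simp [huv]) (Set.toFinite _),
            Set.ncard_singleton]
        rw [hcard3]
        omega
      · obtain ⟨X, hX, hXcard⟩ := ih hl'
        have hXne : X.Nonempty := by
          rw [← Set.ncard_pos (Set.toFinite X)]
          omega
        have hnegcard : (-X).ncard = X.ncard := by
          rw [← Set.image_neg_eq_neg, Set.ncard_image_of_injective X neg_injective]
        have hkey := key_growth hu0 hv0 huv hcl (-X) (by
          obtain ⟨x, hx⟩ := hXne
          exact ⟨-x, Set.neg_mem_neg.mpr hx⟩)
        rcases hX with hX | hX
        · refine ⟨-X + {0, u, v}, Or.inr ?_, ?_⟩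
          · rw [pow_succ, hX, hS', mul_img_r]
          · omega
        · refine ⟨-X + {0, u, v}, Or.inl ?_, ?_⟩
          · rw [pow_succ, hX, hS', mul_img_sr]
          · omega
  obtain ⟨X, hX, hXcard⟩ := main l hl
  rcases hX with hX | hX
  · rw [hX, Set.ncard_image_of_injective X r_injective]
    exact hXcard
  · rw [hX, Set.ncard_image_of_injective X sr_injective]
    exact hXcard
end

section
/- For every n ≥ 3 there exists a generating set of the dihedral group D_n of the form S = {f, r^a f, r^b f} with a ≠ b and a, b ≥ 1 such that λ₁(D_n, S) ≤ ⌊n/2⌋ + 1, where λ₁(D_n, S) = max{ l_S(g s g^{-1}) | g ∈ D_n, s ∈ S }. -/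
open Pointwise DihedralGroup

namespace ThreeReflAux

variable {n : ℕ}

def S (n : ℕ) : Set (DihedralGroup n) := {sr 0, sr (-1), sr (-2)}

lemma mem0 : (sr 0 : DihedralGroup n) ∈ S n := Or.inl rfl

lemma mem1 : (sr (-1) : DihedralGroup n) ∈ S n := Or.inr (Or.inl rfl)

lemma mem2 : (sr (-2) : DihedralGroup n) ∈ S n := Or.inr (Or.inr rfl)

lemma step {m : ZMod n} {l : ℕ} (h : sr m ∈ S n ^ l) :
    sr (m + 2) ∈ S n ^ (l + 2) ∧ sr (m - 2) ∈ S n ^ (l + 2) := by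
  constructor
  · have e1 : sr (m + 2) = sr m * sr (-2) * sr 0 := by
      rw [sr_mul_sr, r_mul_sr]; congr 1; ring
    rw [e1, show l + 2 = l + 1 + 1 from rfl, pow_succ, pow_succ]
    exact Set.mul_mem_mul (Set.mul_mem_mul h mem2) mem0
  · have e2 : sr (m - 2) = sr m * sr 0 * sr (-2) := by
      rw [sr_mul_sr, r_mul_sr]; congr 1; ring
    rw [e2, show l + 2 = l + 1 + 1 from rfl, pow_succ, pow_succ]
    exact Set.mul_mem_mul (Set.mul_mem_mul h mem0) mem2

lemma reach (e : ZMod n) (he : sr e ∈ S n) : ∀ z : ℕ,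
    sr (e + 2 * (z : ZMod n)) ∈ S n ^ (2 * z + 1) ∧
    sr (e - 2 * (z : ZMod n)) ∈ S n ^ (2 * z + 1) := by
  intro z
  induction z with
  | zero => simpa using he
  | succ z ih =>
    have h1 := (step ih.1).1
    have h2 := (step ih.2).2
    have hl : 2 * z + 1 + 2 = 2 * (z + 1) + 1 := by ring
    rw [hl] at h1 h2
    constructor
    · have : e + 2 * ((z + 1 : ℕ) : ZMod n) = e + 2 * (z : ZMod n) + 2 := by
        push_cast; ring
      rwa [this]
    · have : e - 2 * ((z + 1 : ℕ) : ZMod n) = e - 2 * (z : ZMod n) - 2 := by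
        push_cast; ring
      rwa [this]

lemma exists_word (hn : 3 ≤ n) (k : ZMod n) :
    ∃ l, l ≤ n / 2 + 1 ∧ sr k ∈ S n ^ l := by
  haveI : NeZero n := ⟨by omega⟩
  set j := k.val with hjdef
  have hjk : ((j : ℕ) : ZMod n) = k := ZMod.natCast_zmod_val k
  have hjn : j < n := ZMod.val_lt k
  have hn0 : ((n : ℕ) : ZMod n) = 0 := ZMod.natCast_self n
  by_cases hA : j % 2 = 0 ∧ j ≤ n / 2
  · obtain ⟨z, hz⟩ : ∃ z, 2 * z = j := ⟨j / 2, by omega⟩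
    refine ⟨2 * z + 1, by omega, ?_⟩
    have h := (reach (n := n) 0 mem0 z).1
    have heq : (0 : ZMod n) + 2 * (z : ZMod n) = k := by
      have : ((2 * z : ℕ) : ZMod n) = ((j : ℕ) : ZMod n) := by rw [hz]
      push_cast at this
      rw [← hjk]; linear_combination this
    rwa [heq] at h
  · by_cases hB : j % 2 = 1 ∧ j + 1 ≤ n / 2
    · obtain ⟨z, hz⟩ : ∃ z, 2 * z = j + 1 := ⟨(j + 1) / 2, by omega⟩
      refine ⟨2 * z + 1, by omega, ?_⟩
      have h := (reach (n := n) (-1) mem1 z).1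
      have heq : (-1 : ZMod n) + 2 * (z : ZMod n) = k := by
        have : ((2 * z : ℕ) : ZMod n) = ((j + 1 : ℕ) : ZMod n) := by rw [hz]
        push_cast at this
        rw [← hjk]; linear_combination this
      rwa [heq] at h
    · -- minus direction, j' = n - j
      have hj0 : j ≠ 0 := by
        intro h; exact hA ⟨by omega, by omega⟩
      by_cases hP : (n - j) % 2 = 1
      · obtain ⟨z, hz⟩ : ∃ z, j + 2 * z + 1 = n := ⟨(n - j - 1) / 2, by omega⟩
        refine ⟨2 * z + 1, by omega, ?_⟩
        have h := (reach (n := n) (-1) mem1 z).2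
        have heq : (-1 : ZMod n) - 2 * (z : ZMod n) = k := by
          have : ((j + 2 * z + 1 : ℕ) : ZMod n) = ((n : ℕ) : ZMod n) := by rw [hz]
          push_cast at this
          rw [← hjk]; rw [hn0] at this; linear_combination -this
        rwa [heq] at h
      · obtain ⟨z, hz⟩ : ∃ z, j + 2 * z + 2 = n := ⟨(n - j - 2) / 2, by omega⟩
        refine ⟨2 * z + 1, by omega, ?_⟩
        have h := (reach (n := n) (-2) mem2 z).2
        have heq : (-2 : ZMod n) - 2 * (z : ZMod n) = k := by
          have : ((j + 2 * z + 2 : ℕ) : ZMod n) = ((n : ℕ) : ZMod n) := by rw [hz]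
          push_cast at this
          rw [← hjk]; rw [hn0] at this; linear_combination -this
        rwa [heq] at h

lemma closure_top (hn : 3 ≤ n) : Subgroup.closure (S n) = ⊤ := by
  haveI : NeZero n := ⟨by omega⟩
  rw [eq_top_iff]
  intro x _
  have h0 : (sr 0 : DihedralGroup n) ∈ Subgroup.closure (S n) :=
    Subgroup.subset_closure mem0
  have h1 : (sr (-1) : DihedralGroup n) ∈ Subgroup.closure (S n) :=
    Subgroup.subset_closure mem1
  have hr : (r 1 : DihedralGroup n) ∈ Subgroup.closure (S n) := by
    have : (r 1 : DihedralGroup n) = sr (-1) * sr 0 := by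
      rw [sr_mul_sr]; congr 1; ring
    rw [this]; exact mul_mem h1 h0
  rcases x with i | i
  · have : (r i : DihedralGroup n) = r 1 ^ i.val := by
      rw [r_one_pow, ZMod.natCast_zmod_val]
    rw [this]; exact pow_mem hr _
  · have : (sr i : DihedralGroup n) = sr 0 * r 1 ^ i.val := by
      rw [r_one_pow, ZMod.natCast_zmod_val, sr_mul_r, zero_add]
    rw [this]; exact mul_mem h0 (pow_mem hr _)

end ThreeReflAux

/-- For every `n ≥ 3` there exists a generating set of `D_n` of the form
`S = {f, r^a f, r^b f}` with `a ≠ b` and `a, b ≥ 1` such that `λ₁(D_n, S) ≤ ⌊n/2⌋ + 1`. -/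
theorem exists_three_reflection_gen_set (n : ℕ) (hn : 3 ≤ n) :
    ∃ a b : ℕ, ∃ S : Set (DihedralGroup n),
      S = {sr 0, (r 1) ^ a * sr 0, (r 1) ^ b * sr 0} ∧
      1 ≤ a ∧ 1 ≤ b ∧ a ≠ b ∧
      Subgroup.closure S = ⊤ ∧
      ∀ g : DihedralGroup n, ∀ s ∈ S,
        sInf {l : ℕ | g * s * g⁻¹ ∈ S ^ l} ≤ n / 2 + 1 := by
  have hS : ({sr 0, (r 1) ^ 1 * sr 0, (r 1) ^ 2 * sr 0} : Set (DihedralGroup n)) =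
      ThreeReflAux.S n := by
    have e1 : ((r 1) ^ 1 * sr 0 : DihedralGroup n) = sr (-1) := by
      rw [pow_one, r_mul_sr]; congr 1; ring
    have e2 : ((r 1) ^ 2 * sr 0 : DihedralGroup n) = sr (-2) := by
      rw [show ((r 1 : DihedralGroup n) ^ 2) = r 1 * r 1 from sq (r 1), r_mul_r, r_mul_sr]
      congr 1; ring
    rw [e1, e2]; rfl
  refine ⟨1, 2, {sr 0, (r 1) ^ 1 * sr 0, (r 1) ^ 2 * sr 0}, rfl, le_refl 1, one_le_two,
    (by norm_num : (1:ℕ) ≠ 2), ?_, ?_⟩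
  · rw [hS]; exact ThreeReflAux.closure_top hn
  · intro g s hs
    rw [hS] at hs ⊢
    obtain ⟨c, hgc⟩ : ∃ c : ZMod n, g * s * g⁻¹ = sr c := by
      simp only [ThreeReflAux.S, Set.mem_insert_iff, Set.mem_singleton_iff] at hs
      rcases hs with rfl | rfl | rfl <;> rcases g with i | i <;> exact ⟨_, rfl⟩
    obtain ⟨l, hl, hmem⟩ := ThreeReflAux.exists_word hn c
    refine le_trans (Nat.sInf_le ?_) hl
    rw [Set.mem_setOf_eq, hgc]
    exact hmem
end

section
/- Let n ≥ 3 and consider the generating set S = {f, r f, r^{n-1} f} of the dihedral group D_n. Then the maximum word length over all reflections, max{ l_S(r^a f) | 0 ≤ a < n }, equals ⌊n/2⌋ + 1 if n ≡ 0 or 1 (mod 4), and equals ⌊n/2⌋ if n ≡ 2 or 3 (mod 4). -/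
open Pointwise DihedralGroup

namespace MaxReflAux

variable {n : ℕ}

def Sgen (n : ℕ) : Set (DihedralGroup n) := {sr 0, sr 1, sr (-1)}

lemma pow_char (l : ℕ) :
    (Sgen n) ^ l = if l % 2 = 0
      then {x | ∃ t : ℤ, t.natAbs ≤ l ∧ x = r (t : ZMod n)}
      else {x | ∃ t : ℤ, t.natAbs ≤ l ∧ x = sr (t : ZMod n)} := by
  induction l with
  | zero =>
    simp only [pow_zero, Nat.zero_mod, if_pos rfl]
    ext x
    simp only [Set.mem_one, Set.mem_setOf_eq]
    constructor
    · rintro rfl; exact ⟨0, by simp, by simp⟩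
    · rintro ⟨t, ht, rfl⟩
      have : t = 0 := by omega
      simp [this]
  | succ l ih =>
    rw [pow_succ, ih]
    rcases Nat.even_or_odd l with he | ho
    · have h0 : l % 2 = 0 := Nat.even_iff.mp he
      have h1 : (l + 1) % 2 = 1 := by omega
      rw [if_pos h0, if_neg (by omega)]
      ext x
      constructor
      · rintro ⟨y, ⟨t, ht, rfl⟩, g, hg, rfl⟩
        rcases hg with rfl | rfl | rfl
        · exact ⟨-t, by simp; omega, by push_cast [r_mul_sr]; ring_nf⟩
        · exact ⟨1 - t, by omega, by push_cast [r_mul_sr]; ring_nf⟩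
        · exact ⟨-1 - t, by omega, by push_cast [r_mul_sr]; ring_nf⟩
      · rintro ⟨s, hs, rfl⟩
        rcases lt_trichotomy s 0 with h | h | h
        · refine ⟨r ((-1 - s : ℤ) : ZMod n), ⟨-1 - s, by omega, rfl⟩, sr (-1), by simp [Sgen], ?_⟩
          simp only [r_mul_sr]; push_cast; ring_nf
        · refine ⟨r 0, ⟨0, by omega, by norm_num⟩, sr 0, by simp [Sgen], ?_⟩
          simp only [r_mul_sr]; simp [h]
        · refine ⟨r ((1 - s : ℤ) : ZMod n), ⟨1 - s, by omega, rfl⟩, sr 1, by simp [Sgen], ?_⟩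
          simp only [r_mul_sr]; push_cast; ring_nf
    · have h0 : l % 2 = 1 := Nat.odd_iff.mp ho
      rw [if_neg (by omega), if_pos (by omega)]
      ext x
      constructor
      · rintro ⟨y, ⟨t, ht, rfl⟩, g, hg, rfl⟩
        rcases hg with rfl | rfl | rfl
        · exact ⟨-t, by simp; omega, by push_cast [sr_mul_sr]; ring_nf⟩
        · exact ⟨1 - t, by omega, by push_cast [sr_mul_sr]; ring_nf⟩
        · exact ⟨-1 - t, by omega, by push_cast [sr_mul_sr]; ring_nf⟩
      · rintro ⟨s, hs, rfl⟩
        rcases lt_trichotomy s 0 with h | h | h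
        · refine ⟨sr ((-1 - s : ℤ) : ZMod n), ⟨-1 - s, by omega, rfl⟩, sr (-1), by simp [Sgen], ?_⟩
          simp only [sr_mul_sr]; push_cast; ring_nf
        · refine ⟨sr 0, ⟨0, by omega, by norm_num⟩, sr 0, by simp [Sgen], ?_⟩
          simp only [sr_mul_sr]; simp [h]
        · refine ⟨sr ((1 - s : ℤ) : ZMod n), ⟨1 - s, by omega, rfl⟩, sr 1, by simp [Sgen], ?_⟩
          simp only [sr_mul_sr]; push_cast; ring_nf

end MaxReflAux

namespace MaxReflAux

lemma d_le [NeZero n] (j : ZMod n) (t : ℤ) (h : (t : ZMod n) = j) :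
    min j.val (n - j.val) ≤ t.natAbs := by
  have hv : j.val < n := ZMod.val_lt j
  have hj : ((j.val : ℕ) : ZMod n) = j := ZMod.natCast_rightInverse j
  have hd : ((n : ℤ)) ∣ (t - (j.val : ℤ)) := by
    rw [← ZMod.intCast_zmod_eq_zero_iff_dvd]
    push_cast
    rw [hj, h, sub_self]
  obtain ⟨q, hq⟩ := hd
  have hn0 : 0 < (n : ℤ) := by exact_mod_cast Nat.pos_of_ne_zero (NeZero.ne n)
  rcases lt_trichotomy q 0 with hq0 | hq0 | hq0
  · have h1 : (n : ℤ) * q ≤ -n := by nlinarith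
    obtain ⟨m, hm⟩ : ∃ m, (n : ℤ) * q = m := ⟨_, rfl⟩
    rw [hm] at hq h1
    omega
  · subst hq0
    simp only [mul_zero] at hq
    omega
  · have h1 : (n : ℤ) ≤ n * q := by nlinarith
    obtain ⟨m, hm⟩ : ∃ m, (n : ℤ) * q = m := ⟨_, rfl⟩
    rw [hm] at hq h1
    omega

lemma len_eq [NeZero n] (j : ZMod n) :
    sInf {l : ℕ | sr j ∈ (Sgen n) ^ l} =
      (if (min j.val (n - j.val)) % 2 = 1 then min j.val (n - j.val)
       else min j.val (n - j.val) + 1) := by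
  have hv : j.val < n := ZMod.val_lt j
  have hj : ((j.val : ℕ) : ZMod n) = j := ZMod.natCast_rightInverse j
  set d := min j.val (n - j.val) with hd
  set L := if d % 2 = 1 then d else d + 1 with hL
  have hLodd : L % 2 = 1 := by rw [hL]; split <;> omega
  have hdL : d ≤ L := by rw [hL]; split <;> omega
  -- membership of L
  have hmem : sr j ∈ (Sgen n) ^ L := by
    rw [pow_char, if_neg (by omega)]
    rcases le_total j.val (n - j.val) with hc | hc
    · refine ⟨(j.val : ℤ), by omega, ?_⟩
      push_cast
      rw [hj]
    · refine ⟨(j.val : ℤ) - n, by omega, ?_⟩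
      push_cast
      rw [hj]
      simp
  apply le_antisymm
  · exact Nat.sInf_le hmem
  · apply le_csInf ⟨L, hmem⟩
    rintro m hm
    rw [Set.mem_setOf_eq, pow_char] at hm
    split at hm
    · rcases hm with ⟨t, ht, heq⟩; exact absurd heq (by simp)
    · rcases hm with ⟨t, ht, heq⟩
      have hjt : ((t : ℤ) : ZMod n) = j := by
        have := heq; simp only [sr.injEq] at this; exact this.symm
      have hdm : d ≤ t.natAbs := d_le j t hjt
      have hmodd : m % 2 = 1 := by omega
      rw [hL]; split <;> omega

end MaxReflAux

namespace MaxReflAux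

lemma sup_eq (n : ℕ) (hn : 3 ≤ n) [NeZero n] :
    sSup {m : ℕ | ∃ a : ZMod n, m = sInf {l : ℕ | r a * sr 0 ∈ (Sgen n) ^ l}} =
      (if (n / 2) % 2 = 1 then n / 2 else n / 2 + 1) := by
  have key : ∀ a : ZMod n, sInf {l : ℕ | r a * sr 0 ∈ (Sgen n) ^ l} =
      (if (min (-a).val (n - (-a).val)) % 2 = 1 then min (-a).val (n - (-a).val)
       else min (-a).val (n - (-a).val) + 1) := by
    intro a
    have : r a * sr 0 = sr (-a) := by rw [r_mul_sr]; congr 1; ring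
    rw [this, len_eq]
  set M := if (n / 2) % 2 = 1 then n / 2 else n / 2 + 1 with hM
  have hlt : n / 2 < n := by omega
  have hub : ∀ m ∈ {m : ℕ | ∃ a : ZMod n, m = sInf {l : ℕ | r a * sr 0 ∈ (Sgen n) ^ l}},
      m ≤ M := by
    rintro m ⟨a, rfl⟩
    rw [key a]
    have hv : (-a).val < n := ZMod.val_lt _
    rw [hM]
    split <;> split <;> omega
  have hmem : M ∈ {m : ℕ | ∃ a : ZMod n, m = sInf {l : ℕ | r a * sr 0 ∈ (Sgen n) ^ l}} := by
    refine ⟨-((n / 2 : ℕ) : ZMod n), ?_⟩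
    rw [key, neg_neg]
    have hval : (((n / 2 : ℕ) : ZMod n)).val = n / 2 := ZMod.val_natCast_of_lt hlt
    rw [hval]
    have : min (n / 2) (n - n / 2) = n / 2 := by omega
    rw [this]
  exact le_antisymm (csSup_le ⟨M, hmem⟩ hub) (le_csSup ⟨M, hub⟩ hmem)

end MaxReflAux

/-- For `n ≥ 3` and the generating set `S = {f, r f, r^{n-1} f}` of `D_n`,
the maximum word length over all reflections, `max_a l_S(r^a f)`, equals `⌊n/2⌋ + 1` when
`n ≡ 0, 1 (mod 4)` and `⌊n/2⌋` when `n ≡ 2, 3 (mod 4)`. -/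
theorem max_reflection_length_standard (n : ℕ) (hn : 3 ≤ n)
    (S : Set (DihedralGroup n))
    (hS : S = {sr 0, r 1 * sr 0, r ((n - 1 : ℕ) : ZMod n) * sr 0}) :
    ((n % 4 = 0 ∨ n % 4 = 1) →
      sSup {m : ℕ | ∃ a : ZMod n, m = sInf {l : ℕ | r a * sr 0 ∈ S ^ l}} = n / 2 + 1) ∧
    ((n % 4 = 2 ∨ n % 4 = 3) →
      sSup {m : ℕ | ∃ a : ZMod n, m = sInf {l : ℕ | r a * sr 0 ∈ S ^ l}} = n / 2) := by
  haveI : NeZero n := ⟨by omega⟩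
  have hS' : S = MaxReflAux.Sgen n := by
    rw [hS, MaxReflAux.Sgen]
    have h1 : r (1 : ZMod n) * sr 0 = sr (-1) := by rw [r_mul_sr]; congr 1; ring
    have h2 : r ((n - 1 : ℕ) : ZMod n) * sr 0 = sr 1 := by
      rw [r_mul_sr]
      congr 1
      have hc : ((n - 1 : ℕ) : ZMod n) = -1 := by
        have h3 : ((n - 1 : ℕ) : ZMod n) = (n : ZMod n) - 1 := by
          push_cast [Nat.cast_sub (by omega : 1 ≤ n)]; ring
        simp [h3, ZMod.natCast_self]
      rw [hc]; ring
    rw [h1, h2]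
    ext x; simp only [Set.mem_insert_iff, Set.mem_singleton_iff]; tauto
  rw [hS', ]
  have hsup := MaxReflAux.sup_eq n hn
  constructor
  · intro h
    have : (n / 2) % 2 = 0 := by omega
    rw [hsup, if_neg (by omega)]
  · intro h
    have : (n / 2) % 2 = 1 := by omega
    rw [hsup, if_pos this]
end

section
/- Let n ≥ 4, let m = ⌊√n⌋, and consider the generating set S = {f, r f, r^m f} of the dihedral group D_n. Then every element g ∈ D_n has word length l_S(g) ≤ 4⌊√n⌋ + 2; in particular, every element of D_n can be written using O(√n) generators from a suitable three-reflection generating set. -/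
open Pointwise DihedralGroup

/-- For `n ≥ 4`, `m = ⌊√n⌋`, and the generating set `S = {f, r f, r^m f}`
of `D_n`, every element `g ∈ D_n` has word length `l_S(g) ≤ 4⌊√n⌋ + 2`. -/
theorem sqrt_word_length_bound (n : ℕ) (hn : 4 ≤ n) (m : ℕ) (hm : m = Nat.sqrt n)
    (S : Set (DihedralGroup n))
    (hS : S = {sr 0, r 1 * sr 0, (r 1) ^ m * sr 0}) :
    ∀ g : DihedralGroup n, sInf {l : ℕ | g ∈ S ^ l} ≤ 4 * Nat.sqrt n + 2 := by
  have hnz : NeZero n := ⟨by omega⟩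
  have hm1 : 1 ≤ m := by
    rw [hm]; exact Nat.le_sqrt.mpr (by omega : 1 * 1 ≤ n)
  have ha : (sr 0 : DihedralGroup n) ∈ S := by simp [hS]
  have hb : (r 1 * sr 0 : DihedralGroup n) ∈ S := by simp [hS]
  have hc : ((r 1) ^ m * sr 0 : DihedralGroup n) ∈ S := by simp [hS]
  have haa : (sr 0 : DihedralGroup n) * sr 0 = 1 := by
    rw [sr_mul_sr, sub_self, one_def]
  have h1 : (r 1 : DihedralGroup n) ∈ S ^ 2 := by
    have := Set.mul_mem_mul hb ha
    rw [sq]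
    simpa [mul_assoc, haa] using this
  have hmm : ((r 1) ^ m : DihedralGroup n) ∈ S ^ 2 := by
    have := Set.mul_mem_mul hc ha
    rw [sq]
    simpa [mul_assoc, haa] using this
  have hrot : ∀ k : ℕ, (r 1 : DihedralGroup n) ^ k ∈ S ^ (2 * (k / m) + 2 * (k % m)) := by
    intro k
    have h1' : (((r 1) ^ m : DihedralGroup n)) ^ (k / m) ∈ S ^ (2 * (k / m)) := by
      have h0 : ((r 1) ^ m : DihedralGroup n) ^ (k / m) ∈ (S ^ 2) ^ (k / m) :=
        Set.pow_mem_pow hmm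
      rwa [← pow_mul] at h0
    have h2' : ((r 1 : DihedralGroup n)) ^ (k % m) ∈ S ^ (2 * (k % m)) := by
      have h0 : (r 1 : DihedralGroup n) ^ (k % m) ∈ (S ^ 2) ^ (k % m) :=
        Set.pow_mem_pow h1
      rwa [← pow_mul] at h0
    have hk : ((r 1) ^ m : DihedralGroup n) ^ (k / m) * (r 1) ^ (k % m)
        = (r 1 : DihedralGroup n) ^ k := by
      rw [← pow_mul, ← pow_add, Nat.div_add_mod]
    have := Set.mul_mem_mul h1' h2'
    rwa [← pow_add, hk] at this
  have hbound : ∀ k : ℕ, k < n → 2 * (k / m) + 2 * (k % m) ≤ 4 * m := by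
    intro k hk
    have hs : k % m < m := Nat.mod_lt _ (by omega)
    have hq : k / m < m + 2 := by
      rw [Nat.div_lt_iff_lt_mul (by omega : 0 < m)]
      have h2 : n < (m + 1) * (m + 1) := by rw [hm]; exact Nat.lt_succ_sqrt n
      have h3 : (m + 1) * (m + 1) = (m + 2) * m + 1 := by ring
      linarith
    omega
  intro g
  have key : ∀ g : DihedralGroup n, ∃ l : ℕ, l ≤ 4 * m + 2 ∧ g ∈ S ^ l := by
    intro g
    match g with
    | DihedralGroup.r j =>
      refine ⟨2 * (j.val / m) + 2 * (j.val % m), le_trans (hbound j.val (ZMod.val_lt j)) (by omega), ?_⟩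
      have := hrot j.val
      rwa [r_one_pow, ZMod.natCast_val, ZMod.cast_id] at this
    | DihedralGroup.sr j =>
      refine ⟨1 + (2 * (j.val / m) + 2 * (j.val % m)),
        by have := hbound j.val (ZMod.val_lt j); omega, ?_⟩
      have ha1 : (sr 0 : DihedralGroup n) ∈ S ^ 1 := by rwa [pow_one]
      have := Set.mul_mem_mul ha1 (hrot j.val)
      rw [← pow_add] at this
      rwa [r_one_pow, ZMod.natCast_val, ZMod.cast_id, sr_mul_r, zero_add] at this
  obtain ⟨l, hl, hgl⟩ := key g
  calc sInf {l : ℕ | g ∈ S ^ l} ≤ l := Nat.sInf_le hgl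
    _ ≤ 4 * Nat.sqrt n + 2 := by omega
end
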